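/- arXiv:2305.13470 — 2 statements merged into one kernel-verified Lean document; each statement's English description precedes it below -/
import Mathlib

section
/- The Poisson log-likelihood ℓ is twice continuously differentiable on ℝ^p, and for every β, φ, ψ ∈ ℝ^p its second derivative satisfies D²ℓ(β)(φ,ψ) = − ∫_D ⟨φ, z(u)⟩ · ⟨ψ, z(u)⟩ · exp(⟨β, z(u)⟩) du; equivalently D²ℓ(β) = −H(β) where H(β) = ∫_D z(u) z(u)ᵀ exp(⟨β, z(u)⟩) du. -/
/-!
Because `z` is bounded and `D` has finite measure, every integrand `exp ⟪β, z⟫ • z ⊗ ⋯ ⊗ z` is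
dominated by a constant uniformly for `β` in a unit ball, so the integral may be differentiated
under the integral sign as often as needed. Two differentiations give the Hessian
`-∫ exp ⟪β, z⟫ • z ⊗ z`, whose coordinates are the entries of `H`; one more shows that the Hessian
is differentiable, hence continuous, so `ℓ` is `C²`.
-/

open MeasureTheory Metric
open scoped InnerProductSpace

section ExpIntegral

variable {α E G : Type*}
  [NormedAddCommGroup E] [NormedSpace ℝ E] [NormedAddCommGroup G] [NormedSpace ℝ G]
  {L : α → StrongDual ℝ E} {C : ℝ} {g : α → G} {K : ℝ}

lemma exp_apply_le (hLC : ∀ a, ‖L a‖ ≤ C) {β : E} {r : ℝ} (hβ : ‖β‖ ≤ r) (a : α) :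
    Real.exp (L a β) ≤ Real.exp (C * r) := by
  gcongr
  calc L a β ≤ ‖L a β‖ := Real.le_norm_self _
    _ ≤ ‖L a‖ * ‖β‖ := (L a).le_opNorm β
    _ ≤ C * r := mul_le_mul (hLC a) hβ (norm_nonneg _) ((norm_nonneg _).trans (hLC a))

lemma norm_exp_smul_le (hLC : ∀ a, ‖L a‖ ≤ C) (hgK : ∀ a, ‖g a‖ ≤ K) {β : E} {r : ℝ}
    (hβ : ‖β‖ ≤ r) (a : α) : ‖Real.exp (L a β) • g a‖ ≤ Real.exp (C * r) * K := by
  rw [norm_smul, Real.norm_of_nonneg (Real.exp_pos _).le]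
  exact mul_le_mul (exp_apply_le hLC hβ a) (hgK a) (norm_nonneg _) (Real.exp_pos _).le

lemma norm_smulRight_le (hLC : ∀ a, ‖L a‖ ≤ C) (hgK : ∀ a, ‖g a‖ ≤ K) (a : α) :
    ‖(L a).smulRight (g a)‖ ≤ C * K := by
  rw [ContinuousLinearMap.norm_smulRight_apply]
  exact mul_le_mul (hLC a) (hgK a) (norm_nonneg _) ((norm_nonneg _).trans (hLC a))

variable [MeasurableSpace α] {μ : Measure α}

lemma aestronglyMeasurable_exp_smul (hL : AEStronglyMeasurable L μ)
    (hg : AEStronglyMeasurable g μ) (β : E) :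
    AEStronglyMeasurable (fun a => Real.exp (L a β) • g a) μ :=
  (Real.continuous_exp.comp_aestronglyMeasurable (hL.apply_continuousLinearMap β)).smul hg

lemma aestronglyMeasurable_smulRight (hL : AEStronglyMeasurable L μ)
    (hg : AEStronglyMeasurable g μ) : AEStronglyMeasurable (fun a => (L a).smulRight (g a)) μ :=
  (ContinuousLinearMap.smulRightL ℝ E G).continuous₂.comp_aestronglyMeasurable₂ hL hg

lemma integrable_exp_smul [IsFiniteMeasure μ] (hL : AEStronglyMeasurable L μ)
    (hLC : ∀ a, ‖L a‖ ≤ C) (hg : AEStronglyMeasurable g μ) (hgK : ∀ a, ‖g a‖ ≤ K) (β : E) :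
    Integrable (fun a => Real.exp (L a β) • g a) μ :=
  .of_bound (aestronglyMeasurable_exp_smul hL hg β) _
    (ae_of_all _ (norm_exp_smul_le hLC hgK le_rfl))

lemma hasFDerivAt_exp_smul (ℓ : StrongDual ℝ E) (v : G) (β : E) :
    HasFDerivAt (fun β => Real.exp (ℓ β) • v) (Real.exp (ℓ β) • ℓ.smulRight v) β :=
  (((Real.hasDerivAt_exp (ℓ β)).comp_hasFDerivAt β ℓ.hasFDerivAt).smul_const v).congr_fderiv <| by
    ext x
    simp [smul_smul, mul_comm]

theorem hasFDerivAt_integral_exp_smul [IsFiniteMeasure μ] (hL : AEStronglyMeasurable L μ)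
    (hLC : ∀ a, ‖L a‖ ≤ C) (hg : AEStronglyMeasurable g μ) (hgK : ∀ a, ‖g a‖ ≤ K) (β₀ : E) :
    HasFDerivAt (fun β => ∫ a, Real.exp (L a β) • g a ∂μ)
      (∫ a, Real.exp (L a β₀) • (L a).smulRight (g a) ∂μ) β₀ :=
  hasFDerivAt_integral_of_dominated_of_fderiv_le (ball_mem_nhds β₀ one_pos)
    (bound := fun _ => Real.exp (C * (‖β₀‖ + 1)) * (C * K))
    (.of_forall (aestronglyMeasurable_exp_smul hL hg))
    (integrable_exp_smul hL hLC hg hgK β₀)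
    (aestronglyMeasurable_exp_smul hL (aestronglyMeasurable_smulRight hL hg) β₀)
    (ae_of_all _ fun a _ hβ =>
      norm_exp_smul_le hLC (norm_smulRight_le hLC hgK) (norm_lt_of_mem_ball hβ).le a)
    (integrable_const _)
    (ae_of_all _ fun a β _ => hasFDerivAt_exp_smul (L a) (g a) β)

end ExpIntegral

lemma contDiff_two_of_hasFDerivAt {𝕜 E F : Type*} [NontriviallyNormedField 𝕜]
    [NormedAddCommGroup E] [NormedSpace 𝕜 E] [NormedAddCommGroup F] [NormedSpace 𝕜 F]
    {f : E → F} {f' : E → E →L[𝕜] F} {f'' : E → E →L[𝕜] E →L[𝕜] F}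
    (hf : ∀ x, HasFDerivAt f (f' x) x) (hf' : ∀ x, HasFDerivAt f' (f'' x) x)
    (hf'' : Continuous f'') : ContDiff 𝕜 2 f :=
  contDiff_succ_iff_hasFDerivAt (n := 1).2
    ⟨f', contDiff_succ_iff_hasFDerivAt (n := 0).2 ⟨f'', contDiff_zero.2 hf'', hf'⟩, hf⟩

section LogLinear

variable {α E : Type*} [MeasurableSpace α] {μ : Measure α} [IsFiniteMeasure μ]
  [NormedAddCommGroup E] [NormedSpace ℝ E] {L : α → StrongDual ℝ E} {C : ℝ}
  (hL : AEStronglyMeasurable L μ) (hLC : ∀ a, ‖L a‖ ≤ C)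
include hL hLC

theorem hasFDerivAt_integral_exp (β₀ : E) :
    HasFDerivAt (fun β => ∫ a, Real.exp (L a β) ∂μ) (∫ a, Real.exp (L a β₀) • L a ∂μ) β₀ := by
  have h := hasFDerivAt_integral_exp_smul hL hLC aestronglyMeasurable_const
    (g := fun _ => (1 : ℝ)) (K := 1) (fun _ => norm_one.le) β₀
  simp only [smul_eq_mul, mul_one] at h
  exact h.congr_fderiv (integral_congr_ae (ae_of_all _ fun a => by ext; simp))

theorem hasFDerivAt_sub_integral_exp (A : StrongDual ℝ E) (β : E) :
    HasFDerivAt (fun β => A β - ∫ a, Real.exp (L a β) ∂μ)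
      (A - ∫ a, Real.exp (L a β) • L a ∂μ) β :=
  A.hasFDerivAt.sub (hasFDerivAt_integral_exp hL hLC β)

theorem hasFDerivAt_const_sub_integral_exp_smul (A : StrongDual ℝ E) (β : E) :
    HasFDerivAt (fun β => A - ∫ a, Real.exp (L a β) • L a ∂μ)
      (-∫ a, Real.exp (L a β) • (L a).smulRight (L a) ∂μ) β := by
  simpa using (hasFDerivAt_integral_exp_smul hL hLC hL hLC β).const_sub A

theorem contDiff_two_sub_integral_exp (A : StrongDual ℝ E) :
    ContDiff ℝ 2 (fun β => A β - ∫ a, Real.exp (L a β) ∂μ) :=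
  contDiff_two_of_hasFDerivAt (hasFDerivAt_sub_integral_exp hL hLC A)
    (hasFDerivAt_const_sub_integral_exp_smul hL hLC A) <| continuous_iff_continuousAt.2 fun β =>
      (hasFDerivAt_integral_exp_smul hL hLC (aestronglyMeasurable_smulRight hL hL)
        (norm_smulRight_le hLC hLC) β).continuousAt.neg

theorem fderiv_fderiv_sub_integral_exp_apply (A : StrongDual ℝ E) (β φ ψ : E) :
    fderiv ℝ (fderiv ℝ (fun β => A β - ∫ a, Real.exp (L a β) ∂μ)) β φ ψ =
      -∫ a, L a φ * L a ψ * Real.exp (L a β) ∂μ := by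
  have hfderiv : fderiv ℝ (fun β => A β - ∫ a, Real.exp (L a β) ∂μ) =
      fun β => A - ∫ a, Real.exp (L a β) • L a ∂μ :=
    funext fun β => (hasFDerivAt_sub_integral_exp hL hLC A β).fderiv
  have hint := integrable_exp_smul hL hLC (aestronglyMeasurable_smulRight hL hL)
    (norm_smulRight_le hLC hLC) β
  rw [hfderiv, (hasFDerivAt_const_sub_integral_exp_smul hL hLC A β).fderiv,
    neg_apply, neg_apply,
    ContinuousLinearMap.integral_apply hint,
    ContinuousLinearMap.integral_apply (hint.apply_continuousLinearMap φ)]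
  simp [mul_comm]

end LogLinear

theorem integrable_apply_mul_apply_mul_exp_inner {α ι : Type*} [MeasurableSpace α]
    {μ : Measure α} [IsFiniteMeasure μ] [Fintype ι] {z : α → EuclideanSpace ℝ ι}
    (hz : AEStronglyMeasurable z μ) {C : ℝ} (hzC : ∀ a, ‖z a‖ ≤ C) (β : EuclideanSpace ℝ ι)
    (i j : ι) : Integrable (fun a => z a i * z a j * Real.exp ⟪β, z a⟫_ℝ) μ := by
  have hzij := integrable_exp_smul (L := fun a => innerSL ℝ (z a)) (g := fun a => z a i * z a j)
    ((innerSL ℝ).continuous.comp_aestronglyMeasurable hz)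
    (fun a => (innerSL_apply_norm ℝ (z a)).trans_le (hzC a)) (by fun_prop)
    (fun a => by
      rw [norm_mul]
      exact mul_le_mul ((PiLp.norm_apply_le _ _).trans (hzC a))
        ((PiLp.norm_apply_le _ _).trans (hzC a)) (norm_nonneg _) ((norm_nonneg _).trans (hzC a))) β
  simpa only [innerSL_apply_apply, real_inner_comm β, smul_eq_mul, mul_comm] using hzij

theorem integral_inner_mul_inner_mul {α ι : Type*} [MeasurableSpace α] {μ : Measure α}
    [Fintype ι] {z : α → EuclideanSpace ℝ ι} {w : α → ℝ}
    (hint : ∀ i j, Integrable (fun a => z a i * z a j * w a) μ) (φ ψ : EuclideanSpace ℝ ι) :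
    ∫ a, ⟪φ, z a⟫_ℝ * ⟪ψ, z a⟫_ℝ * w a ∂μ =
      ∑ i, ∑ j, φ i * (∫ a, z a i * z a j * w a ∂μ) * ψ j := by
  have hexpand : ∀ a, ⟪φ, z a⟫_ℝ * ⟪ψ, z a⟫_ℝ * w a =
      ∑ i, ∑ j, φ i * (z a i * z a j * w a) * ψ j := by
    intro a
    simp only [PiLp.inner_apply, RCLike.inner_apply, conj_trivial]
    rw [Finset.sum_mul_sum, Finset.sum_mul]
    refine Finset.sum_congr rfl fun i _ => ?_
    rw [Finset.sum_mul]
    exact Finset.sum_congr rfl fun j _ => by ring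
  have hint' : ∀ i j, Integrable (fun a => φ i * (z a i * z a j * w a) * ψ j) μ :=
    fun i j => ((hint i j).const_mul _).mul_const _
  simp_rw [hexpand]
  rw [integral_finsetSum _ fun i _ => integrable_finsetSum _ fun j _ => hint' i j]
  refine Finset.sum_congr rfl fun i _ => ?_
  rw [integral_finsetSum _ fun j _ => hint' i j]
  simp only [integral_mul_const, integral_const_mul]

theorem stmt2_general (d p : ℕ)
    (D : Set (EuclideanSpace ℝ (Fin d)))
    (hDfin : volume D < ⊤)
    (z : EuclideanSpace ℝ (Fin d) → EuclideanSpace ℝ (Fin p))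
    (hzm : Measurable z) (C : ℝ) (hzb : ∀ u, ‖z u‖ ≤ C)
    (x : Finset (EuclideanSpace ℝ (Fin d)))
    (ℓ : EuclideanSpace ℝ (Fin p) → ℝ)
    (hℓ : ∀ β, ℓ β = (∑ u ∈ x, ⟪β, z u⟫_ℝ) - ∫ u in D, Real.exp ⟪β, z u⟫_ℝ)
    (H : EuclideanSpace ℝ (Fin p) → Matrix (Fin p) (Fin p) ℝ)
    (hH : ∀ β i j, H β i j = ∫ u in D, z u i * z u j * Real.exp ⟪β, z u⟫_ℝ) :
    ContDiff ℝ 2 ℓ ∧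
      ∀ β φ ψ : EuclideanSpace ℝ (Fin p),
        fderiv ℝ (fderiv ℝ ℓ) β φ ψ =
          - ∫ u in D, ⟪φ, z u⟫_ℝ * ⟪ψ, z u⟫_ℝ * Real.exp ⟪β, z u⟫_ℝ ∧
        fderiv ℝ (fderiv ℝ ℓ) β φ ψ = -(∑ i, ∑ j, φ i * H β i j * ψ j) := by
  have : IsFiniteMeasure (volume.restrict D) := isFiniteMeasure_restrict.2 hDfin.ne
  set L := fun u => innerSL ℝ (z u)
  have hL : ∀ u β, L u β = ⟪β, z u⟫_ℝ := fun u β => real_inner_comm β (z u)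
  have hLm : AEStronglyMeasurable L (volume.restrict D) :=
    (innerSL ℝ).continuous.comp_aestronglyMeasurable hzm.aestronglyMeasurable
  have hLC : ∀ u, ‖L u‖ ≤ C := fun u => (innerSL_apply_norm ℝ (z u)).trans_le (hzb u)
  have hℓL : ℓ = fun β => (∑ u ∈ x, L u) β - ∫ u in D, Real.exp (L u β) := by
    funext β
    simp only [hℓ, hL, sum_apply]
  have hhess : ∀ β φ ψ, fderiv ℝ (fderiv ℝ ℓ) β φ ψ =
      - ∫ u in D, ⟪φ, z u⟫_ℝ * ⟪ψ, z u⟫_ℝ * Real.exp ⟪β, z u⟫_ℝ := fun β φ ψ => by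
    rw [hℓL, fderiv_fderiv_sub_integral_exp_apply hLm hLC]
    simp only [hL]
  refine ⟨hℓL ▸ contDiff_two_sub_integral_exp hLm hLC _, fun β φ ψ => ⟨hhess β φ ψ, ?_⟩⟩
  simp only [hhess, integral_inner_mul_inner_mul
    (integrable_apply_mul_apply_mul_exp_inner hzm.aestronglyMeasurable hzb β), hH]

/-- The Poisson log-likelihood of a log-linear intensity model is twice continuously
differentiable, with second derivative
D²ℓ(β)(φ,ψ) = − ∫_D ⟨φ,z(u)⟩⟨ψ,z(u)⟩ exp(⟨β,z(u)⟩) du, i.e. D²ℓ(β) = −H(β) where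
H(β) = ∫_D z(u)z(u)ᵀ exp(⟨β,z(u)⟩) du. -/
theorem stmt2 (d p : ℕ)
    (D : Set (EuclideanSpace ℝ (Fin d))) (hD : MeasurableSet D)
    (hDfin : volume D < ⊤)
    (z : EuclideanSpace ℝ (Fin d) → EuclideanSpace ℝ (Fin p))
    (hzm : Measurable z) (C : ℝ) (hzb : ∀ u, ‖z u‖ ≤ C)
    (x : Finset (EuclideanSpace ℝ (Fin d))) (hx : ↑x ⊆ D)
    (ℓ : EuclideanSpace ℝ (Fin p) → ℝ)
    (hℓ : ∀ β, ℓ β = (∑ u ∈ x, ⟪β, z u⟫_ℝ) - ∫ u in D, Real.exp ⟪β, z u⟫_ℝ)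
    (H : EuclideanSpace ℝ (Fin p) → Matrix (Fin p) (Fin p) ℝ)
    (hH : ∀ β i j, H β i j = ∫ u in D, z u i * z u j * Real.exp ⟪β, z u⟫_ℝ) :
    ContDiff ℝ 2 ℓ ∧
      ∀ β φ ψ : EuclideanSpace ℝ (Fin p),
        fderiv ℝ (fderiv ℝ ℓ) β φ ψ =
          - ∫ u in D, ⟪φ, z u⟫_ℝ * ⟪ψ, z u⟫_ℝ * Real.exp ⟪β, z u⟫_ℝ ∧
        fderiv ℝ (fderiv ℝ ℓ) β φ ψ = -(∑ i, ∑ j, φ i * H β i j * ψ j) :=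
  stmt2_general d p D hDfin z hzm C hzb x ℓ hℓ H hH
end

section
/- Let (μ_n), (p_n), (s_n), (τ_n), (a_n), (b_n) be sequences of positive reals, let γ > 0 and C, C' > 0 be constants, and assume: μ_n → ∞; s_n ≤ p_n for all n; p_n^4/μ_n → 0; a_n ≤ C'·τ_n for all n; b_n^{−1} ≤ C·τ_n^{−1}·(p_n/μ_n)^{γ/2} for all n; τ_n·√μ_n → 0; and τ_n·μ_n^{1/4 + 3γ/8} → ∞. Then a_n·√(s_n·μ_n/p_n) → 0 and b_n^{−1}·√(p_n²/μ_n) → 0 as n → ∞. -/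
open Filter

/-- Verification of condition (C.7) of the adaptive lasso theorem: under μ_n → ∞,
s_n ≤ p_n, p_n⁴/μ_n → 0, a_n ≤ C'τ_n, b_n⁻¹ ≤ C τ_n⁻¹ (p_n/μ_n)^{γ/2},
τ_n √μ_n → 0 and τ_n μ_n^{1/4+3γ/8} → ∞, we have
a_n √(s_n μ_n/p_n) → 0 and b_n⁻¹ √(p_n²/μ_n) → 0. -/
theorem stmt10 (μ p s τ a b : ℕ → ℝ)
    (hμ : ∀ n, 0 < μ n) (hp : ∀ n, 0 < p n) (hs : ∀ n, 0 < s n)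
    (hτ : ∀ n, 0 < τ n) (ha : ∀ n, 0 < a n) (hb : ∀ n, 0 < b n)
    (γ C C' : ℝ) (hγ : 0 < γ) (hC : 0 < C) (hC' : 0 < C')
    (hμtop : Tendsto μ atTop atTop)
    (hsp : ∀ n, s n ≤ p n)
    (hpμ : Tendsto (fun n => (p n) ^ 4 / μ n) atTop (nhds 0))
    (haτ : ∀ n, a n ≤ C' * τ n)
    (hbound : ∀ n, (b n)⁻¹ ≤ C * (τ n)⁻¹ * (p n / μ n) ^ (γ / 2))
    (hτμ : Tendsto (fun n => τ n * Real.sqrt (μ n)) atTop (nhds 0))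
    (hτμtop : Tendsto (fun n => τ n * (μ n) ^ ((1 / 4 : ℝ) + 3 * γ / 8)) atTop atTop) :
    Tendsto (fun n => a n * Real.sqrt (s n * μ n / p n)) atTop (nhds 0) ∧
      Tendsto (fun n => (b n)⁻¹ * Real.sqrt ((p n) ^ 2 / μ n)) atTop (nhds 0) := by
  set e : ℝ := (1 / 4 : ℝ) + 3 * γ / 8 with he
  constructor
  · apply squeeze_zero (g := fun n => C' * (τ n * Real.sqrt (μ n)))
    · intro n
      have h0 := (ha n).le
      positivity
    · intro n
      have hτn := hτ n
      have h1 : Real.sqrt (s n * μ n / p n) ≤ Real.sqrt (μ n) := by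
        apply Real.sqrt_le_sqrt
        rw [div_le_iff₀ (hp n)]
        nlinarith [(hμ n).le, hsp n, (hs n).le]
      calc a n * Real.sqrt (s n * μ n / p n)
          ≤ (C' * τ n) * Real.sqrt (μ n) :=
            mul_le_mul (haτ n) h1 (Real.sqrt_nonneg _) (by positivity)
        _ = C' * (τ n * Real.sqrt (μ n)) := by ring
    · simpa using hτμ.const_mul C'
  · apply squeeze_zero' (g := fun n => C * (τ n * μ n ^ e)⁻¹)
    · filter_upwards with n
      have hbn := (hb n).le
      positivity
    · filter_upwards [hpμ.eventually (gt_mem_nhds one_pos)] with n hn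
      have hμn := hμ n
      have hpn := hp n
      have hτn := hτ n
      have hbn := hb n
      have hp4 : p n ^ 4 ≤ μ n := by
        rw [div_lt_one hμn] at hn; linarith
      have h4 : ((p n) ^ (4 : ℕ) : ℝ) ^ ((1 : ℝ) / 4) ≤ μ n ^ ((1 : ℝ) / 4) :=
        Real.rpow_le_rpow (by positivity) hp4 (by norm_num)
      have h4eq : ((p n) ^ (4 : ℕ) : ℝ) ^ ((1 : ℝ) / 4) = p n := by
        rw [← Real.rpow_natCast (p n) 4, ← Real.rpow_mul (hp n).le]
        norm_num
      rw [h4eq] at h4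
      have hsq : Real.sqrt ((p n) ^ 2 / μ n) = p n / Real.sqrt (μ n) := by
        rw [Real.sqrt_div (sq_nonneg _), Real.sqrt_sq (hp n).le]
      have h3 : p n / Real.sqrt (μ n) ≤ μ n ^ (-(1 : ℝ) / 4) := by
        rw [Real.sqrt_eq_rpow, div_le_iff₀ (by positivity)]
        calc p n ≤ μ n ^ ((1 : ℝ) / 4) := h4
          _ = μ n ^ (-(1 : ℝ) / 4) * μ n ^ ((1 : ℝ) / 2) := by
            rw [← Real.rpow_add hμn]; norm_num
      have hpm : p n / μ n ≤ μ n ^ (-(3 : ℝ) / 4) := by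
        rw [div_le_iff₀ hμn]
        calc p n ≤ μ n ^ ((1 : ℝ) / 4) := h4
          _ = μ n ^ (-(3 : ℝ) / 4 + 1) := by norm_num
          _ = μ n ^ (-(3 : ℝ) / 4) * μ n := by rw [Real.rpow_add hμn, Real.rpow_one]
      have h2 : (p n / μ n) ^ (γ / 2) ≤ μ n ^ (-(3 * γ) / 8) := by
        calc (p n / μ n) ^ (γ / 2) ≤ (μ n ^ (-(3 : ℝ) / 4)) ^ (γ / 2) :=
              Real.rpow_le_rpow (by positivity) hpm (by linarith)
          _ = μ n ^ (-(3 * γ) / 8) := by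
              rw [← Real.rpow_mul hμn.le]; congr 1; ring
      have hmul : μ n ^ (-(3 * γ) / 8) * μ n ^ (-(1 : ℝ) / 4) = (μ n ^ e)⁻¹ := by
        rw [← Real.rpow_add hμn, ← Real.rpow_neg hμn.le]
        congr 1; rw [he]; ring
      calc (b n)⁻¹ * Real.sqrt ((p n) ^ 2 / μ n)
          = (b n)⁻¹ * (p n / Real.sqrt (μ n)) := by rw [hsq]
        _ ≤ (C * (τ n)⁻¹ * (p n / μ n) ^ (γ / 2)) * (p n / Real.sqrt (μ n)) :=
            mul_le_mul_of_nonneg_right (hbound n) (by positivity)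
        _ ≤ (C * (τ n)⁻¹ * μ n ^ (-(3 * γ) / 8)) * μ n ^ (-(1 : ℝ) / 4) :=
            mul_le_mul (mul_le_mul_of_nonneg_left h2 (by positivity)) h3
              (by positivity) (by positivity)
        _ = C * (τ n * μ n ^ e)⁻¹ := by
            rw [mul_assoc, hmul, mul_inv]; ring
    · have h0 : Tendsto (fun n => (τ n * μ n ^ e)⁻¹) atTop (nhds 0) :=
        hτμtop.inv_tendsto_atTop
      simpa using h0.const_mul C
end
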